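/- Bounded Bregman step by function decrease: if f_ξ is L-relatively smooth with respect to h and η ≤ 1/L, then the stochastic mirror descent update x⁺ satisfies (1/η)·D_h(x, x⁺) ≤ f_ξ(x) - f_ξ(x⁺). -/

import Mathlib

open MeasureTheory
open scoped RealInnerProductSpace

/-- Bregman divergence of `g` with gradient map `g'`. -/
noncomputable def Dbreg {d : ℕ} (g : EuclideanSpace ℝ (Fin d) → ℝ)
    (g' : EuclideanSpace ℝ (Fin d) → EuclideanSpace ℝ (Fin d))
    (x y : EuclideanSpace ℝ (Fin d)) : ℝ :=
  g x - g y - ⟪g' y, x - y⟫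

/-! Adding the Bregman divergences of `h` between `x` and `xp` in both orders gives
`⟪h' x - h' xp, x - xp⟫ = η ⟪g' x, x - xp⟫` by the mirror step. Relative smoothness bounds
`⟪g' x, x - xp⟫` by `g x - g xp + L D_h(xp, x)`, and since `L ≤ 1 / η` the nonnegative term
`D_h(xp, x)` (convexity of `h`) is absorbed. -/

open Set

theorem ConvexOn.add_fderiv_sub_le {E : Type*} [NormedAddCommGroup E] [NormedSpace ℝ E]
    {s : Set E} {f : E → ℝ} {f' : E →L[ℝ] ℝ} {u v : E}
    (hf : ConvexOn ℝ s f) (hu : u ∈ s) (hv : v ∈ s) (hderiv : HasFDerivAt f f' v) :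
    f v + f' (u - v) ≤ f u := by
  set A : ℝ →ᵃ[ℝ] E := AffineMap.lineMap v u
  have hA0 : A 0 = v := AffineMap.lineMap_apply_zero v u
  have hA1 : A 1 = u := AffineMap.lineMap_apply_one v u
  have hcomp : HasDerivAt (f ∘ A) (f' (u - v)) 0 := by
    rw [← hA0] at hderiv
    simpa using hderiv.comp_hasDerivAt 0 (AffineMap.hasDerivAt_lineMap (a := v) (b := u))
  have := (hf.comp_affineMap A).le_slope_of_hasDerivAt (x := 0) (y := 1)
    (by simpa [hA0] using hv) (by simpa [hA1] using hu) one_pos hcomp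
  rw [slope_def_field] at this
  simp only [Function.comp_apply, hA0, hA1, sub_zero, div_one] at this
  linarith

theorem Dbreg_nonneg {d : ℕ} {g : EuclideanSpace ℝ (Fin d) → ℝ}
    {g' : EuclideanSpace ℝ (Fin d) → EuclideanSpace ℝ (Fin d)} {u v : EuclideanSpace ℝ (Fin d)}
    (hg : ConvexOn ℝ univ g) (hgrad : HasGradientAt g (g' v) v) : 0 ≤ Dbreg g g' u v := by
  have := hg.add_fderiv_sub_le (mem_univ u) (mem_univ v) hgrad.hasFDerivAt
  rw [InnerProductSpace.toDual_apply_apply] at this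
  unfold Dbreg
  linarith

theorem Dbreg_add_Dbreg_swap {d : ℕ} (g : EuclideanSpace ℝ (Fin d) → ℝ)
    (g' : EuclideanSpace ℝ (Fin d) → EuclideanSpace ℝ (Fin d)) (x y : EuclideanSpace ℝ (Fin d)) :
    Dbreg g g' x y + Dbreg g g' y x = ⟪g' x - g' y, x - y⟫ := by
  simp only [Dbreg, inner_sub_left, inner_sub_right]
  ring

theorem smd_step_function_decrease_general {d : ℕ}
    (h g : EuclideanSpace ℝ (Fin d) → ℝ)
    (h' g' : EuclideanSpace ℝ (Fin d) → EuclideanSpace ℝ (Fin d))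
    (L η : ℝ) (hη : 0 < η) (hηL : η ≤ 1 / L)
    (hconv : StrictConvexOn ℝ Set.univ h)
    (hgrad : ∀ x, HasGradientAt h (h' x) x)
    (hsmooth : ∀ u v, Dbreg g g' u v ≤ L * Dbreg h h' u v)
    (x xp : EuclideanSpace ℝ (Fin d))
    (hxp : h' xp = h' x - η • g' x) :
    (1 / η) * Dbreg h h' x xp ≤ g x - g xp := by
  have hL : L ≤ 1 / η := (le_one_div (one_div_pos.mp (hη.trans_le hηL)) hη).mpr hηL
  have hD : 0 ≤ Dbreg h h' xp x := Dbreg_nonneg hconv.convexOn (hgrad x)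
  have hsum : Dbreg h h' x xp + Dbreg h h' xp x = η * ⟪g' x, x - xp⟫ := by
    rw [Dbreg_add_Dbreg_swap, hxp, sub_sub_cancel, real_inner_smul_left]
  have hdecr : ⟪g' x, x - xp⟫ - L * Dbreg h h' xp x ≤ g x - g xp := by
    have := hsmooth xp x
    rw [Dbreg, ← neg_sub x xp, inner_neg_right] at this
    linarith
  calc (1 / η) * Dbreg h h' x xp = ⟪g' x, x - xp⟫ - (1 / η) * Dbreg h h' xp x := by
        field_simp
        linarith
    _ ≤ ⟪g' x, x - xp⟫ - L * Dbreg h h' xp x := by gcongr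
    _ ≤ g x - g xp := hdecr

/-- Bregman step bounded by function decrease. -/
theorem smd_step_function_decrease {d : ℕ}
    (h g : EuclideanSpace ℝ (Fin d) → ℝ)
    (h' g' : EuclideanSpace ℝ (Fin d) → EuclideanSpace ℝ (Fin d))
    (L η : ℝ) (hL : 0 < L) (hη : 0 < η) (hηL : η ≤ 1 / L)
    (hconv : StrictConvexOn ℝ Set.univ h)
    (hgrad : ∀ x, HasGradientAt h (h' x) x)
    (hgconv : ConvexOn ℝ Set.univ g)
    (hggrad : ∀ x, HasGradientAt g (g' x) x)
    (hsmooth : ∀ u v, Dbreg g g' u v ≤ L * Dbreg h h' u v)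
    (x xp : EuclideanSpace ℝ (Fin d))
    (hxp : h' xp = h' x - η • g' x) :
    (1 / η) * Dbreg h h' x xp ≤ g x - g xp :=
  smd_step_function_decrease_general h g h' g' L η hη hηL hconv hgrad hsmooth x xp hxp
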